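/- arXiv:1109.5320 — 5 statements merged into one kernel-verified Lean document; each statement's English description precedes it below -/
import Mathlib

section
/- Let X be an N×(d+1) real matrix, w_1,…,w_N > 0, and for a probability vector p = (p_1,…,p_N) (p_i ≥ 0, Σp_i = 1) let f(p) = det(Xᵀ diag(w_1 p_1,…,w_N p_N) X). If p maximizes f over all probability vectors and f(p) > 0, then p_i ≤ 1/(d+1) for every i. -/
open Matrix


private lemma detRankOne {n : Type*} [Fintype n] [DecidableEq n] (M : Matrix n n ℝ)
    (h : IsUnit M.det) (u v : n → ℝ) :
    (M + replicateCol Unit u * replicateRow Unit v).det = M.det * (1 + v ⬝ᵥ M⁻¹ *ᵥ u) := by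
  rw [det_add_replicateCol_mul_replicateRow h, det_unique (1 + replicateRow Unit v * M⁻¹ * replicateCol Unit u)]
  congr 1
  simp [Matrix.mul_apply, Matrix.mulVec, dotProduct, Finset.mul_sum, Finset.sum_mul]
  rw [Finset.sum_comm]
  exact Finset.sum_congr rfl fun j _ => Finset.sum_congr rfl fun k _ => by ring


/-- If a probability vector `p` maximizes `f(p) = det(Xᵀ diag(w p) X)` over the simplex
and `f(p) > 0`, then `p i ≤ 1/(d+1)` for every `i`. -/
theorem stmt5 (N d : ℕ) (X : Matrix (Fin N) (Fin (d + 1)) ℝ)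
    (w : Fin N → ℝ) (hw : ∀ i, 0 < w i)
    (f : (Fin N → ℝ) → ℝ)
    (hf : ∀ q, f q = (Xᵀ * Matrix.diagonal (fun i => w i * q i) * X).det)
    (p : Fin N → ℝ)
    (hpS : p ∈ {q : Fin N → ℝ | (∀ i, 0 ≤ q i) ∧ ∑ i, q i = 1})
    (hmax : IsMaxOn f {q : Fin N → ℝ | (∀ i, 0 ≤ q i) ∧ ∑ i, q i = 1} p)
    (hpos : 0 < f p) :
    ∀ i, p i ≤ 1 / (d + 1 : ℝ) := by
  obtain ⟨hp0, hp1⟩ := hpS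
  intro i
  by_contra hcon
  push_neg at hcon
  have hdpos : (0:ℝ) < (d:ℝ) + 1 := by positivity
  have hpi : 0 < p i := lt_trans (by positivity) hcon
  set M : Matrix (Fin (d+1)) (Fin (d+1)) ℝ :=
    Xᵀ * Matrix.diagonal (fun j => w j * p j) * X with hM
  have hdetM : M.det = f p := (hf p).symm
  have hMu : IsUnit M.det := by rw [hdetM]; exact isUnit_iff_ne_zero.mpr hpos.ne'
  set x : Fin (d+1) → ℝ := fun k => X i k with hx
  set b : ℝ := x ⬝ᵥ (M⁻¹ *ᵥ x) with hb
  set c : ℝ := w i * b with hc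
  set q : ℝ → (Fin N → ℝ) := fun t j => (1-t) * p j + t * (if j = i then 1 else 0) with hq
  -- matrix identity
  have key : ∀ t : ℝ, Xᵀ * Matrix.diagonal (fun j => w j * q t j) * X
      = (1-t) • M + replicateCol Unit ((t * w i) • x) * replicateRow Unit x := by
    intro t
    ext k l
    simp only [hM, Matrix.add_apply, Matrix.smul_apply, Matrix.mul_apply,
      Matrix.transpose_apply, Matrix.diagonal_apply, hq, hx, smul_eq_mul,
      Pi.smul_apply, replicateCol_apply, replicateRow_apply, ite_mul, mul_ite, zero_mul, mul_zero,
      Finset.sum_ite_eq, Finset.sum_ite_eq', Finset.mem_univ, if_true, Finset.univ_unique,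
      Finset.sum_singleton]
    have step : ∀ j : Fin N, X j k * (w j * ((1-t) * p j + if j = i then t*1 else 0)) * X j l
        = (1-t) * (X j k * (w j * p j) * X j l) + (if j = i then t * w i * X i k * X i l else 0) := by
      intro j; by_cases hji : j = i <;> simp [hji] <;> ring
    rw [Finset.sum_congr rfl (fun j _ => step j), Finset.sum_add_distrib,
      Finset.sum_ite_eq' Finset.univ i (fun _ => t * w i * X i k * X i l), ← Finset.mul_sum]
    simp
  -- determinant formula along the line segment
  have hdetq : ∀ t : ℝ, t ≠ 1 → f (q t) = M.det * ((1-t)^d * (1 - t + t * c)) := by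
    intro t ht
    have h1t : (1:ℝ) - t ≠ 0 := sub_ne_zero.mpr (Ne.symm ht)
    have hu : IsUnit ((1-t) • M).det := by
      rw [det_smul]
      exact isUnit_iff_ne_zero.mpr (mul_ne_zero (pow_ne_zero _ h1t) hMu.ne_zero)
    rw [hf, key t, detRankOne _ hu]
    haveI : Invertible ((1:ℝ) - t) := invertibleOfNonzero h1t
    rw [Matrix.inv_smul M ((1:ℝ)-t) hMu, Matrix.smul_mulVec, Matrix.mulVec_smul, det_smul]
    simp only [Fintype.card_fin, invOf_eq_inv, dotProduct_smul, smul_eq_mul, ← hb, hc]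
    field_simp
    ring
  -- local maximality of the one-variable polynomial
  set φ : ℝ → ℝ := fun t => M.det * ((1-t)^d * (1 - t + t * c)) with hφ
  set ε : ℝ := min (p i) (1/2) with hε
  have hεpos : 0 < ε := lt_min hpi (by norm_num)
  have hmem : ∀ t : ℝ, |t| < ε → q t ∈ {q : Fin N → ℝ | (∀ i, 0 ≤ q i) ∧ ∑ i, q i = 1} := by
    intro t ht
    obtain ⟨ht1, ht2⟩ := abs_lt.mp ht
    have htpi : -(p i) < t := lt_of_le_of_lt (by simp [hε]) ht1
    have hthalf : t < 1/2 := lt_of_lt_of_le ht2 (min_le_right _ _)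
    constructor
    · intro j
      by_cases hji : j = i
      · subst hji
        have hqv : q t j = (1-t) * p j + t := by simp [hq]
        rw [hqv]
        rcases le_or_gt 0 t with h | h
        · have h1 : (0:ℝ) ≤ 1 - t := by linarith
          nlinarith [hp0 j]
        · nlinarith [mul_nonneg (neg_nonneg.mpr h.le) (hp0 j)]
      · have hqv : q t j = (1-t) * p j := by simp [hq, hji]
        rw [hqv]
        exact mul_nonneg (by linarith : (0:ℝ) ≤ 1 - t) (hp0 j)
    · simp only [hq, mul_ite, mul_one, mul_zero]
      rw [Finset.sum_add_distrib, ← Finset.mul_sum, hp1,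
        Finset.sum_ite_eq' Finset.univ i (fun _ => t)]
      simp
  have hlocmax : IsLocalMax φ 0 := by
    filter_upwards [Metric.ball_mem_nhds (0:ℝ) hεpos] with t ht
    rw [Metric.mem_ball, Real.dist_eq, sub_zero] at ht
    have ht1 : t ≠ 1 := by
      intro h
      have := lt_of_lt_of_le ht (min_le_right _ _)
      rw [h] at this; norm_num at this
    calc φ t = f (q t) := (hdetq t ht1).symm
      _ ≤ f p := hmax (hmem t ht)
      _ = φ 0 := by simp [hφ, ← hdetM]
  -- derivative at 0
  have h1 : HasDerivAt (fun t : ℝ => 1 - t) (-1) 0 := by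
    simpa using (hasDerivAt_id (0:ℝ)).const_sub 1
  have h3 : HasDerivAt (fun t : ℝ => 1 - t + t * c) (-1 + c) 0 :=
    h1.add (hasDerivAt_mul_const c)
  have h5 : HasDerivAt φ (M.det * (c - ((d:ℝ)+1))) 0 := by
    have h4 := ((h1.pow d).mul h3).const_mul M.det
    convert h4 using 1
    · rfl
    · rfl
    · rfl
    simp only [sub_zero, zero_mul, add_zero, one_pow, mul_one, Pi.pow_apply]
    ring
  have h6 := hlocmax.hasDerivAt_eq_zero h5
  have hcval : c = (d:ℝ) + 1 := by
    rcases mul_eq_zero.mp h6 with h | h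
    · exact absurd h hMu.ne_zero
    · linarith
  -- quadratic form expansion / Cauchy-Schwarz step
  have hMx : M *ᵥ (M⁻¹ *ᵥ x) = x := by
    rw [Matrix.mulVec_mulVec, Matrix.mul_nonsing_inv _ hMu, Matrix.one_mulVec]
  set u : Fin (d+1) → ℝ := M⁻¹ *ᵥ x with huu
  set y : Fin N → ℝ := X *ᵥ u with hy
  have hyi : y i = b := rfl
  have hquad : u ⬝ᵥ (M *ᵥ u) = ∑ j, (w j * p j) * (y j)^2 := by
    rw [hM, ← Matrix.mulVec_mulVec, ← Matrix.mulVec_mulVec, Matrix.dotProduct_mulVec,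
      Matrix.vecMul_transpose, ← hy]
    simp only [dotProduct, Matrix.mulVec_diagonal]
    exact Finset.sum_congr rfl fun j _ => by ring
  have hbq : b = ∑ j, (w j * p j) * (y j)^2 := by
    rw [← hquad, huu, hMx]
    exact dotProduct_comm x (M⁻¹ *ᵥ x)
  have hterm : (w i * p i) * (y i)^2 ≤ b := by
    rw [hbq]
    exact Finset.single_le_sum
      (f := fun j => (w j * p j) * (y j)^2)
      (fun j _ => mul_nonneg (mul_nonneg (hw j).le (hp0 j)) (sq_nonneg _))
      (Finset.mem_univ i)
  rw [hyi] at hterm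
  have hwb : w i * b = (d:ℝ) + 1 := by rw [← hc]; exact hcval
  have hbpos : 0 < b := by nlinarith [hw i]
  have h7 : 1 < p i * ((d:ℝ)+1) := (div_lt_iff₀ hdpos).mp hcon
  nlinarith [hterm, hbpos, hwb, h7, mul_pos hbpos (by linarith : (0:ℝ) < p i * ((d:ℝ)+1) - 1)]
end

section
/- Under the 2² main-effects model (design matrix X with rows (1,1,1),(1,1,−1),(1,−1,1),(1,−1,−1)) with weights w_1,w_2,w_3,w_4 > 0, the design p_1 = p_2 = p_3 = 1/3, p_4 = 0 maximizes det(Xᵀ diag(w_ip_i) X) over the probability simplex if and only if 1/w_1 + 1/w_2 + 1/w_3 ≤ 1/w_4. -/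
open Matrix

lemma amgm3' (x y s : ℝ) (hx : 0 ≤ x) (hy : 0 ≤ y) (hs : 0 ≤ s) (h : x + y + s = 1) :
    x*y*s ≤ 1/27 := by
  nlinarith [mul_nonneg hs (sq_nonneg (x-y)), mul_nonneg hx (sq_nonneg (y-s)),
    mul_nonneg hy (sq_nonneg (x-s)), mul_nonneg hx (sq_nonneg (x-y)),
    mul_nonneg hy (sq_nonneg (y-s)), mul_nonneg hs (sq_nonneg (x-s)),
    sq_nonneg (x+y+s)]

lemma aux7 (a b c d x y z t : ℝ) (ha : 0 < a) (hb : 0 < b) (hc : 0 < c) (hd : 0 < d)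
    (hx : 0 ≤ x) (hy : 0 ≤ y) (hz : 0 ≤ z) (ht : 0 ≤ t)
    (hsum : x + y + z + t = 1) (hzx : z ≤ x) (hzy : z ≤ y)
    (hBA : d*(b*c + a*c + a*b) ≤ a*b*c) :
    a*b*c*(x*y*z) + a*b*d*(x*y*t) + a*c*d*(x*z*t) + b*c*d*(y*z*t) ≤ a*b*c/27 := by
  have h1 : a*c*d*(x*z*t) ≤ a*c*d*(x*y*t) := by
    nlinarith [mul_nonneg (mul_nonneg (mul_nonneg (mul_nonneg (mul_nonneg ha.le hc.le) hd.le) hx) ht) (sub_nonneg.2 hzy)]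
  have h2 : b*c*d*(y*z*t) ≤ b*c*d*(x*y*t) := by
    nlinarith [mul_nonneg (mul_nonneg (mul_nonneg (mul_nonneg (mul_nonneg hb.le hc.le) hd.le) hy) ht) (sub_nonneg.2 hzx)]
  have h3 : 0 ≤ x*y*t := mul_nonneg (mul_nonneg hx hy) ht
  have h4 : (d*(b*c + a*c + a*b))*(x*y*t) ≤ (a*b*c)*(x*y*t) :=
    mul_le_mul_of_nonneg_right hBA h3
  have h5 : x*y*(z+t) ≤ 1/27 := amgm3' x y (z+t) hx hy (by linarith) (by linarith)
  have h6 : (a*b*c)*(x*y*(z+t)) ≤ (a*b*c)*(1/27) :=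
    mul_le_mul_of_nonneg_left h5 (by positivity)
  nlinarith [h1, h2, h4, h6]

lemma fwd7 (A B : ℝ) (hA : 0 < A) (hAB : A < B) :
    ∃ t : ℝ, 0 ≤ t ∧ t ≤ 1 ∧ A/27 < A*((1-t)/3)^3 + B*((1-t)/3)^2*t := by
  have hd : 0 < 3*B - A := by linarith
  refine ⟨(B-A)/(2*(3*B-A)), le_of_lt (div_pos (by linarith) (by linarith)), ?_, ?_⟩
  · rw [div_le_one (by linarith)]; linarith
  · set t := (B-A)/(2*(3*B-A)) with ht
    have h0 : 0 < t := div_pos (by linarith) (by linarith)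
    have h1 : t < 1 := by rw [ht, div_lt_one (by linarith)]; linarith
    have key : 2*(3*B-A)*t = B-A := by rw [ht]; field_simp
    have e2 : A + (3*B-A)*t = (A+B)/2 := by linear_combination key / 2
    have e3 : A*(1-t)^3 + 3*B*(1-t)^2*t = (1-t)^2 * ((A+B)/2) := by
      linear_combination (1-t)^2 * e2
    have e1 : (1-t)^2 ≥ 1-2*t := by nlinarith [sq_nonneg t]
    have e4 : 2*A < (1-2*t)*(A+B) := by nlinarith [key, sq_nonneg (B-A), hd]
    have e5 : (1-2*t)*(A+B) ≤ (1-t)^2*(A+B) := by nlinarith [e1]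
    have : A < (1-t)^2 * ((A+B)/2) := by linarith
    nlinarith [this, e3]

/-- For the 2² main-effects model, the design `p = (1/3, 1/3, 1/3, 0)` is D-optimal
over the probability simplex iff `1/w₁ + 1/w₂ + 1/w₃ ≤ 1/w₄`. -/
theorem stmt7 (w : Fin 4 → ℝ) (hw : ∀ i, 0 < w i)
    (X : Matrix (Fin 4) (Fin 3) ℝ)
    (hX : X = !![1, 1, 1; 1, 1, -1; 1, -1, 1; 1, -1, -1])
    (f : (Fin 4 → ℝ) → ℝ)
    (hf : ∀ q, f q = (Xᵀ * Matrix.diagonal (fun i => w i * q i) * X).det)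
    (p : Fin 4 → ℝ) (hp : p = ![1/3, 1/3, 1/3, 0]) :
    IsMaxOn f {q : Fin 4 → ℝ | (∀ i, 0 ≤ q i) ∧ ∑ i, q i = 1} p ↔
      1 / w 0 + 1 / w 1 + 1 / w 2 ≤ 1 / w 3 := by
  subst hX hp
  have ha := hw 0; have hb := hw 1; have hc := hw 2; have hd := hw 3
  set a := w 0; set b := w 1; set c := w 2; set d := w 3
  have hfq : ∀ q : Fin 4 → ℝ, f q =
      16*(a*b*c*(q 0*q 1*q 2) + a*b*d*(q 0*q 1*q 3) + a*c*d*(q 0*q 2*q 3) + b*c*d*(q 1*q 2*q 3)) := by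
    intro q
    rw [hf]
    simp [Matrix.det_fin_three, Matrix.mul_apply, Fin.sum_univ_succ, Matrix.diagonal]
    have h3 : (Fin.succ 2 : Fin 4) = 3 := rfl
    simp only [a, b, c, d]; ring
  have hfp : f ![1/3, 1/3, 1/3, 0] = 16*(a*b*c)/27 := by
    rw [hfq]; norm_num [Matrix.cons_val_two, Matrix.cons_val_three, Matrix.tail_cons, Matrix.head_cons]; ring
  have hiff : (1/a + 1/b + 1/c ≤ 1/d) ↔ (d*(b*c + a*c + a*b) ≤ a*b*c) := by
    rw [div_add_div _ _ ha.ne' hb.ne', div_add_div _ _ (by positivity) hc.ne',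
      div_le_div_iff₀ (by positivity) hd]
    constructor <;> intro h <;> nlinarith [h]
  rw [isMaxOn_iff, hiff]
  constructor
  · intro hmax
    by_contra hcon
    push_neg at hcon
    obtain ⟨t, ht0, ht1, hstrict⟩ := fwd7 (a*b*c) (d*(b*c + a*c + a*b)) (by positivity) hcon
    set x := (1-t)/3 with hx
    have hxpos : 0 ≤ x := by rw [hx]; linarith
    have hmem : (![x, x, x, t] : Fin 4 → ℝ) ∈
        {q : Fin 4 → ℝ | (∀ i, 0 ≤ q i) ∧ ∑ i, q i = 1} := by
      refine ⟨fun i => ?_, ?_⟩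
      · fin_cases i <;> simpa using (by assumption : _)
      · rw [Fin.sum_univ_four]; simp [hx]; ring
    have hle := hmax _ hmem
    rw [hfq, hfp] at hle
    simp only [Matrix.cons_val_zero, Matrix.cons_val_one, Matrix.head_cons,
      Matrix.cons_val_two, Matrix.tail_cons, Matrix.cons_val_three] at hle
    nlinarith [hle, hstrict]
  · intro hBA q hq
    obtain ⟨hpos, hsum⟩ := hq
    rw [Fin.sum_univ_four] at hsum
    rw [hfq, hfp]
    rcases le_total (q 0) (q 1) with h01 | h01 <;>
      rcases le_total (q 0) (q 2) with h02 | h02 <;>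
      rcases le_total (q 1) (q 2) with h12 | h12
    · linarith [aux7 b c a d (q 1) (q 2) (q 0) (q 3) hb hc ha hd (hpos 1) (hpos 2) (hpos 0) (hpos 3) (by linarith) h01 h02 (by linarith [hBA])]
    · linarith [aux7 b c a d (q 1) (q 2) (q 0) (q 3) hb hc ha hd (hpos 1) (hpos 2) (hpos 0) (hpos 3) (by linarith) h01 h02 (by linarith [hBA])]
    · linarith [aux7 a b c d (q 0) (q 1) (q 2) (q 3) ha hb hc hd (hpos 0) (hpos 1) (hpos 2) (hpos 3) (by linarith) h02 (le_trans h02 h01) (by linarith [hBA])]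
    · linarith [aux7 a b c d (q 0) (q 1) (q 2) (q 3) ha hb hc hd (hpos 0) (hpos 1) (hpos 2) (hpos 3) (by linarith) h02 h12 (by linarith [hBA])]
    · linarith [aux7 a c b d (q 0) (q 2) (q 1) (q 3) ha hc hb hd (hpos 0) (hpos 2) (hpos 1) (hpos 3) (by linarith) h01 h12 (by linarith [hBA])]
    · linarith [aux7 a b c d (q 0) (q 1) (q 2) (q 3) ha hb hc hd (hpos 0) (hpos 1) (hpos 2) (hpos 3) (by linarith) (le_trans h12 h01) h12 (by linarith [hBA])]
    · linarith [aux7 a c b d (q 0) (q 2) (q 1) (q 3) ha hc hb hd (hpos 0) (hpos 2) (hpos 1) (hpos 3) (by linarith) h01 h12 (by linarith [hBA])]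
    · linarith [aux7 a b c d (q 0) (q 1) (q 2) (q 3) ha hb hc hd (hpos 0) (hpos 1) (hpos 2) (hpos 3) (by linarith) h02 h12 (by linarith [hBA])]
end

section
/- Let X be an N×(d+1) real matrix with rows x_i, and let p be a probability vector with f(p) = det(Xᵀ diag(w p) X) > 0 where w_i > 0. Suppose p is supported on exactly d+1 indices I = {i_1,…,i_{d+1}}. Then f(p) = (Π_{j∈I} p_j w_j) · det(X[I])², and consequently f(p) ≤ (d+1)^{−(d+1)} (Π_{j∈I} w_j) det(X[I])² with equality iff p_j = 1/(d+1) for all j ∈ I. -/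
open Matrix

/-- Squared determinant of the square submatrix of `X` formed by the rows in `J`
(defined to be `0` if `J` does not have exactly `m` elements). -/
noncomputable def dsq {N m : ℕ} (X : Matrix (Fin N) (Fin m) ℝ) (J : Finset (Fin N)) : ℝ :=
  if h : J.card = m then
    (X.submatrix (fun t : Fin m => (J.equivFin.symm (Fin.cast h.symm t) : Fin N)) id).det ^ 2
  else 0

lemma amgm_aux {ι : Type*} (s : Finset ι) (n : ℕ) (hcard : s.card = n + 1)
    (p : ι → ℝ) (hpos : ∀ i ∈ s, 0 < p i) (hsum : ∑ i ∈ s, p i = 1) :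
    ∏ i ∈ s, p i ≤ ((n : ℝ) + 1) ^ (-(n + 1 : ℤ)) ∧
      (∏ i ∈ s, p i = ((n : ℝ) + 1) ^ (-(n + 1 : ℤ)) ↔
        ∀ j ∈ s, p j = 1 / ((n : ℝ) + 1)) := by
  have hn : (0 : ℝ) < (n : ℝ) + 1 := by positivity
  have hB : ((n : ℝ) + 1) ^ (-(n + 1 : ℤ)) = (((n : ℝ) + 1)⁻¹) ^ (n + 1) := by
    rw [_root_.zpow_neg, ← _root_.inv_zpow]
    norm_cast
  by_cases hall : ∀ j ∈ s, p j = 1 / ((n : ℝ) + 1)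
  · have hprod : ∏ i ∈ s, p i = ((n : ℝ) + 1) ^ (-(n + 1 : ℤ)) := by
      rw [Finset.prod_congr rfl hall, Finset.prod_const, hcard, hB, one_div]
    exact ⟨le_of_eq hprod, by simp only [hprod, true_iff]; intro j hj; exact hall j hj⟩
  · -- strict Jensen
    have hne : ∃ j ∈ s, ∃ k ∈ s, p j ≠ p k := by
      by_contra h
      push_neg at h
      apply hall
      intro j hj
      have hconst : ∑ i ∈ s, p i = s.card • p j :=
        Finset.sum_congr rfl (fun k hk => h k hk j hj) |>.trans (Finset.sum_const _)
      rw [hsum, hcard, nsmul_eq_mul] at hconst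
      push_cast at hconst
      field_simp
      linarith
    have hjensen := strictConcaveOn_log_Ioi.lt_map_sum
      (w := fun _ : ι => ((n : ℝ) + 1)⁻¹) (p := p) (t := s)
      (fun i _ => by positivity)
      (by rw [Finset.sum_const, hcard, nsmul_eq_mul]; push_cast; field_simp)
      (fun i hi => Set.mem_Ioi.mpr (hpos i hi)) hne
    have hppos : 0 < ∏ i ∈ s, p i := Finset.prod_pos hpos
    have hlhs : ∑ i ∈ s, ((n : ℝ) + 1)⁻¹ • Real.log (p i)
        = ((n : ℝ) + 1)⁻¹ * Real.log (∏ i ∈ s, p i) := by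
      rw [Real.log_prod (s := s) (f := p) (fun i hi => (hpos i hi).ne'), Finset.mul_sum]
      simp [smul_eq_mul]
    have hrhs : ∑ i ∈ s, ((n : ℝ) + 1)⁻¹ • p i = ((n : ℝ) + 1)⁻¹ := by
      simp only [smul_eq_mul, ← Finset.mul_sum, hsum, mul_one]
    rw [hlhs, hrhs] at hjensen
    have hlog : Real.log (∏ i ∈ s, p i) < (n + 1 : ℝ) * Real.log (((n : ℝ) + 1)⁻¹) := by
      have := (mul_lt_mul_iff_right₀ hn).mpr hjensen
      rwa [← mul_assoc, mul_inv_cancel₀ hn.ne', one_mul] at this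
    have hlt : ∏ i ∈ s, p i < ((n : ℝ) + 1) ^ (-(n + 1 : ℤ)) := by
      rw [hB]
      have h2 : Real.log (∏ i ∈ s, p i) < Real.log ((((n : ℝ) + 1)⁻¹) ^ (n + 1)) := by
        rw [Real.log_pow]; push_cast; exact hlog
      have := Real.exp_lt_exp.mpr h2
      rwa [Real.exp_log hppos, Real.exp_log (by positivity)] at this
    exact ⟨hlt.le, ⟨fun h => absurd h hlt.ne, fun h => absurd h hall⟩⟩

lemma tri_apply {m n : Type*} [Fintype m] [DecidableEq m] [Fintype n] (A : Matrix m n ℝ) (c : m → ℝ)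
    (a b : n) : (Aᵀ * Matrix.diagonal c * A) a b = ∑ i, A i a * (c i * A i b) := by
  rw [Matrix.mul_assoc, Matrix.mul_apply]
  simp [Matrix.diagonal_mul, Matrix.transpose_apply]

/-- For a probability vector `p` supported exactly on a `(d+1)`-set `I` with `f(p) > 0`:
`f(p) = (∏_{j∈I} p_j w_j) det(X[I])²`, the AM–GM bound
`f(p) ≤ (d+1)^{-(d+1)} (∏_{j∈I} w_j) det(X[I])²`, with equality iff `p` is uniform on `I`. -/
theorem stmt9 (N d : ℕ) (X : Matrix (Fin N) (Fin (d + 1)) ℝ)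
    (w : Fin N → ℝ) (hw : ∀ i, 0 < w i)
    (f : (Fin N → ℝ) → ℝ)
    (hf : ∀ q, f q = (Xᵀ * Matrix.diagonal (fun i => w i * q i) * X).det)
    (p : Fin N → ℝ) (hp0 : ∀ i, 0 ≤ p i) (hp1 : ∑ i, p i = 1)
    (I : Finset (Fin N)) (hI : I.card = d + 1)
    (hsupp : ∀ i, p i ≠ 0 ↔ i ∈ I)
    (hfp : 0 < f p) :
    f p = (∏ j ∈ I, p j * w j) * dsq X I ∧
    f p ≤ ((d : ℝ) + 1) ^ (-(d + 1 : ℤ)) * (∏ j ∈ I, w j) * dsq X I ∧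
    (f p = ((d : ℝ) + 1) ^ (-(d + 1 : ℤ)) * (∏ j ∈ I, w j) * dsq X I ↔
      ∀ j ∈ I, p j = 1 / (d + 1 : ℝ)) := by
  classical
  set e : Fin (d + 1) → Fin N :=
    fun t => (I.equivFin.symm (Fin.cast hI.symm t) : Fin N) with he
  set Y := X.submatrix e id with hY
  have hzero : ∀ i, i ∉ I → p i = 0 := by
    intro i hi
    by_contra h
    exact hi ((hsupp i).mp h)
  have hppos : ∀ j ∈ I, 0 < p j :=
    fun j hj => lt_of_le_of_ne (hp0 j) (Ne.symm ((hsupp j).mpr hj))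
  have hsum1 : ∑ i ∈ I, p i = 1 :=
    (Finset.sum_subset (Finset.subset_univ I) (fun i _ hi => hzero i hi)).trans hp1
  -- transfer sums/products over I to Fin (d+1) via the equivalence
  have heq : ∀ (g : Fin N → ℝ), ∑ t : Fin (d + 1), g (e t) = ∑ i ∈ I, g i := by
    intro g
    rw [← Finset.sum_coe_sort I g]
    exact Fintype.sum_equiv ((finCongr hI.symm).trans I.equivFin.symm) _ _ (fun t => rfl)
  have heqp : ∀ (g : Fin N → ℝ), ∏ t : Fin (d + 1), g (e t) = ∏ i ∈ I, g i := by
    intro g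
    rw [← Finset.prod_coe_sort I g]
    exact Fintype.prod_equiv ((finCongr hI.symm).trans I.equivFin.symm) _ _ (fun t => rfl)
  have hmat : Xᵀ * Matrix.diagonal (fun i => w i * p i) * X
      = Yᵀ * Matrix.diagonal (fun t => w (e t) * p (e t)) * Y := by
    ext a b
    rw [tri_apply, tri_apply]
    simp only [hY, Matrix.submatrix_apply, id_eq]
    rw [heq (fun i => X i a * (w i * p i * X i b))]
    refine (Finset.sum_subset (Finset.subset_univ I) (fun i _ hi => ?_)).symm
    simp [hzero i hi]
  have hdsq : dsq X I = Y.det ^ 2 := by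
    rw [dsq, dif_pos hI]
  have hdet : f p = (∏ j ∈ I, p j * w j) * dsq X I := by
    rw [hf, hmat, Matrix.det_mul, Matrix.det_mul, Matrix.det_transpose,
      Matrix.det_diagonal, hdsq, ← heqp (fun i => p i * w i)]
    rw [show (∏ t : Fin (d+1), w (e t) * p (e t)) = ∏ t : Fin (d+1), p (e t) * w (e t) from
      Finset.prod_congr rfl (fun t _ => mul_comm _ _)]
    ring
  have hprodpw : 0 < ∏ j ∈ I, p j * w j :=
    Finset.prod_pos (fun j hj => mul_pos (hppos j hj) (hw j))
  have hdsqpos : 0 < dsq X I := by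
    by_contra h
    push_neg at h
    have := mul_nonpos_of_nonneg_of_nonpos hprodpw.le h
    rw [← hdet] at this
    exact absurd this (not_le.mpr hfp)
  have hwpos : 0 < ∏ j ∈ I, w j := Finset.prod_pos (fun j _ => hw j)
  have hsplit : ∏ j ∈ I, p j * w j = (∏ j ∈ I, p j) * ∏ j ∈ I, w j :=
    Finset.prod_mul_distrib
  obtain ⟨hle, hiff⟩ := amgm_aux I d hI p hppos hsum1
  have key : f p = (∏ j ∈ I, p j) * ((∏ j ∈ I, w j) * dsq X I) := by
    rw [hdet, hsplit]; ring
  have hwd : (0 : ℝ) < (∏ j ∈ I, w j) * dsq X I := mul_pos hwpos hdsqpos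
  refine ⟨hdet, ?_, ?_⟩
  · rw [key, mul_assoc]
    exact mul_le_mul_of_nonneg_right hle hwd.le
  · rw [key, mul_assoc]
    constructor
    · intro h
      exact hiff.mp (mul_right_cancel₀ hwd.ne' h)
    · intro h
      rw [hiff.mpr h]
end

section
/- Let f(p) = det(Xᵀ diag(w_1p_1,…,w_Np_N) X) for a fixed N×(d+1) matrix X and fixed w_i ≥ 0, where p is a probability vector. For fixed index i and a base point p with p_i < 1, define f_i(z) = f applied to the vector with i-th entry z and j-th entry p_j(1−z)/(1−p_i) for j ≠ i, for z ∈ [0,1]. Then there exist constants a, b ≥ 0 with f_i(z) = a·z·(1−z)^d + b·(1−z)^{d+1} for all z ∈ [0,1]. -/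
open Matrix

private lemma det_psd_nonneg {n : ℕ} {A : Matrix (Fin n) (Fin n) ℝ} (hA : A.PosSemidef) :
    0 ≤ A.det := by
  exact hA.det_nonneg

/-- Rank-one update of a determinant, as an explicit sum over rows. -/
private lemma det_add_outer {n : ℕ} (P : Matrix (Fin n) (Fin n) ℝ) (u v : Fin n → ℝ) :
    (Matrix.of fun j k => P j k + u j * v k).det
      = P.det + ∑ j, u j * (P.updateRow j v).det := by
  classical
  set f := (Matrix.detRowAlternating : (Fin n → ℝ) [⋀^Fin n]→ₗ[ℝ] ℝ) with hf
  set fM := f.toMultilinearMap with hfM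
  set Q : Matrix (Fin n) (Fin n) ℝ := Matrix.of fun j k => u j * v k with hQ
  have hrow : ∀ j, Q j = u j • v := by
    intro j; funext k; simp [hQ, Pi.smul_apply, Matrix.of_apply]
  have h1 : (Matrix.of fun j k => P j k + u j * v k) = Q + P := by
    ext j k; simp [hQ, add_comm]
  rw [h1]
  have h2 : (Q + P).det = fM (Q + P) := rfl
  rw [h2, show fM (Q + P) = _ from fM.map_add_univ Q P]
  have hzero : ∀ s : Finset (Fin n), 1 < s.card → fM (s.piecewise Q P) = 0 := by
    intro s hs
    obtain ⟨j₁, hj₁, j₂, hj₂, hne⟩ := Finset.one_lt_card.mp hs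
    set m₀ : Fin n → Fin n → ℝ := s.piecewise Q P with hm₀
    have e₁ : m₀ j₁ = u j₁ • v := by
      rw [hm₀]; erw [Finset.piecewise_eq_of_mem _ _ _ hj₁]; rw [hrow]
    have e₂ : m₀ j₂ = u j₂ • v := by
      rw [hm₀]; erw [Finset.piecewise_eq_of_mem _ _ _ hj₂]; rw [hrow]
    set m₁ := Function.update m₀ j₁ v with hm₁
    have step1 : fM m₀ = u j₁ • fM m₁ := by
      have h : m₀ = Function.update m₁ j₁ (u j₁ • v) := by
        rw [hm₁, Function.update_idem, ← e₁, Function.update_eq_self]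
      conv_lhs => rw [h]
      rw [hm₁, fM.map_update_smul, Function.update_idem]
    set m₂ := Function.update m₁ j₂ v with hm₂
    have step2 : fM m₁ = u j₂ • fM m₂ := by
      have hm₁j₂ : m₁ j₂ = u j₂ • v := by
        rw [hm₁, Function.update_of_ne hne.symm, e₂]
      have h : m₁ = Function.update m₂ j₂ (u j₂ • v) := by
        rw [hm₂, Function.update_idem, ← hm₁j₂, Function.update_eq_self]
      conv_lhs => rw [h]
      rw [hm₂, fM.map_update_smul, Function.update_idem]
    have hm₂eq : m₂ j₁ = m₂ j₂ := by
      rw [hm₂, Function.update_of_ne hne, hm₁, Function.update_self,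
        Function.update_self]
    have hz : fM m₂ = 0 := f.map_eq_zero_of_eq m₂ hm₂eq hne
    rw [step1, step2, hz]
    simp
  have hsub : (insert (∅ : Finset (Fin n))
      (Finset.univ.image fun j : Fin n => ({j} : Finset (Fin n)))) ⊆ Finset.univ :=
    Finset.subset_univ _
  rw [← Finset.sum_subset hsub (by
    intro s _ hs
    apply hzero
    rcases Nat.lt_or_ge s.card 2 with h | h
    · interval_cases h' : s.card
      · exact absurd (Finset.card_eq_zero.mp h' ▸ Finset.mem_insert_self _ _) hs
      · obtain ⟨j, rfl⟩ := Finset.card_eq_one.mp h'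
        exact absurd (Finset.mem_insert_of_mem (Finset.mem_image_of_mem _ (Finset.mem_univ j))) hs
    · exact h)]
  rw [Finset.sum_insert (by simp), Finset.sum_image (fun a _ b _ h => Finset.singleton_injective h)]
  erw [Finset.piecewise_empty]
  have hPd : fM P = P.det := rfl
  rw [hPd]
  congr 1
  refine Finset.sum_congr rfl fun j _ => ?_
  erw [Finset.piecewise_singleton]; rw [hrow j]
  have h := fM.map_update_smul (Function.update (P : Fin n → Fin n → ℝ) j v) j (u j) v
  erw [Function.update_idem, Function.update_idem] at h
  rw [h]
  rfl

/-- The lift-one profile function `f_i(z)` of `f(p) = det(Xᵀ diag(w p) X)` has the form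
`a z (1-z)^d + b (1-z)^{d+1}` with nonnegative constants `a, b`. -/
theorem stmt14 (N d : ℕ) (X : Matrix (Fin N) (Fin (d + 1)) ℝ)
    (w : Fin N → ℝ) (hw : ∀ i, 0 ≤ w i)
    (f : (Fin N → ℝ) → ℝ)
    (hf : ∀ q, f q = (Xᵀ * Matrix.diagonal (fun i => w i * q i) * X).det)
    (p : Fin N → ℝ) (hp0 : ∀ i, 0 ≤ p i) (hp1 : ∑ i, p i = 1)
    (i : Fin N) (hpi : p i < 1)
    (fi : ℝ → ℝ)
    (hfi : ∀ z, fi z = f (fun j => if j = i then z else p j * (1 - z) / (1 - p i))) :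
    ∃ a b : ℝ, 0 ≤ a ∧ 0 ≤ b ∧
      ∀ z ∈ Set.Icc (0 : ℝ) 1, fi z = a * z * (1 - z) ^ d + b * (1 - z) ^ (d + 1) := by
  classical
  have hpi' : (0:ℝ) < 1 - p i := by linarith
  set M₀ : Matrix (Fin (d+1)) (Fin (d+1)) ℝ :=
    Xᵀ * Matrix.diagonal (fun n => w n * p n) * X with hM₀
  set v : Fin (d+1) → ℝ := fun k => X i k with hv
  set u : Fin (d+1) → ℝ := fun j => w i * X i j with hu
  set S : ℝ := ∑ j, u j * (M₀.updateRow j v).det with hS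
  set D : ℝ := M₀.det with hD
  -- key decomposition of fi
  have key : ∀ z : ℝ, fi z
      = ((1-z)/(1-p i))^(d+1) * D
        + ((z - p i)/(1 - p i)) * ((1-z)/(1-p i))^d * S := by
    intro z
    set c : ℝ := (1-z)/(1-p i) with hc
    set t : ℝ := (z - p i)/(1-p i) with ht
    rw [hfi, hf]
    set q : Fin N → ℝ := fun j => if j = i then z else p j * (1 - z) / (1 - p i) with hq
    have hmat : Xᵀ * Matrix.diagonal (fun n => w n * q n) * X
        = Matrix.of fun j k => (c • M₀) j k + (t * u j) * v k := by
      ext j k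
      have lhs : (Xᵀ * Matrix.diagonal (fun n => w n * q n) * X) j k
          = ∑ n, X n j * (w n * q n) * X n k := by
        rw [Matrix.mul_apply]
        refine Finset.sum_congr rfl fun n _ => ?_
        rw [Matrix.mul_diagonal, Matrix.transpose_apply]
      have rhs0 : (c • M₀) j k = c * ∑ n, X n j * (w n * p n) * X n k := by
        rw [Matrix.smul_apply, smul_eq_mul, hM₀, Matrix.mul_apply]
        congr 1
        refine Finset.sum_congr rfl fun n _ => ?_
        rw [Matrix.mul_diagonal, Matrix.transpose_apply]
      rw [Matrix.of_apply, lhs, rhs0, Finset.mul_sum]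
      have term : ∀ n : Fin N, X n j * (w n * q n) * X n k
          = c * (X n j * (w n * p n) * X n k)
            + (if n = i then (t * u j) * v k else 0) := by
        intro n
        by_cases hn : n = i
        · subst hn
          simp only [hq, hu, hv]
          simp only [if_true]
          have hz : z = c * p n + t := by
            rw [hc, ht]; field_simp; ring
          rw [hz]; ring
        · simp only [hq, if_neg hn, if_neg hn, hc]
          field_simp
          ring
      rw [Finset.sum_congr rfl fun n _ => term n, Finset.sum_add_distrib,
        Finset.sum_ite_eq' Finset.univ i (fun _ => (t * u j) * v k)]
      simp
    rw [hmat, det_add_outer]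
    have hdet1 : (c • M₀).det = c^(d+1) * D := by
      rw [Matrix.det_smul, hD]; simp
    have hupd : ∀ j, ((c • M₀).updateRow j v).det = c^d * (M₀.updateRow j v).det := by
      intro j
      have heq : (c • M₀).updateRow j v
          = Matrix.of fun a b => (if a = j then 1 else c) * (M₀.updateRow j v) a b := by
        ext a b
        by_cases h : a = j
        · subst h; simp [Matrix.updateRow_apply]
        · simp [Matrix.updateRow_apply, h, Matrix.smul_apply]
      rw [heq, Matrix.det_mul_column]
      congr 1
      rw [← Finset.mul_prod_erase Finset.univ _ (Finset.mem_univ j), if_pos rfl, one_mul]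
      rw [Finset.prod_congr rfl (fun a ha => if_neg (Finset.mem_erase.mp ha).1),
        Finset.prod_const, Finset.card_erase_of_mem (Finset.mem_univ j)]
      simp
    rw [hdet1]
    have : ∑ j, t * u j * ((c • M₀).updateRow j v).det = t * c^d * S := by
      rw [hS, Finset.mul_sum]
      refine Finset.sum_congr rfl fun j _ => ?_
      rw [hupd j]; ring
    rw [this]
  -- nonnegativity of fi on [0,1]
  have hnn : ∀ z ∈ Set.Icc (0:ℝ) 1, 0 ≤ fi z := by
    intro z hz
    obtain ⟨hz0, hz1⟩ := hz
    rw [hfi, hf]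
    set q : Fin N → ℝ := fun j => if j = i then z else p j * (1 - z) / (1 - p i) with hq
    have hqn : ∀ n, 0 ≤ w n * q n := by
      intro n
      refine mul_nonneg (hw n) ?_
      by_cases hn : n = i
      · subst hn; simp [hq, hz0]
      · simp only [hq, if_neg hn]
        exact div_nonneg (mul_nonneg (hp0 n) (by linarith)) (le_of_lt hpi')
    have hDpsd : (Matrix.diagonal fun n => w n * q n).PosSemidef :=
      Matrix.posSemidef_diagonal_iff.mpr hqn
    have hXH : Xᴴ = Xᵀ := by ext a b; simp [Matrix.conjTranspose_apply]
    have := hDpsd.conjTranspose_mul_mul_same X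
    rw [hXH] at this
    exact det_psd_nonneg this
  set A : ℝ := S / (1-p i)^d with hA
  set B : ℝ := (D - p i * S)/(1-p i)^(d+1) with hB
  have ident : ∀ z : ℝ, fi z = A * z * (1-z)^d + B * (1-z)^(d+1) := by
    intro z
    rw [key z, hA, hB]
    have h1 : (1 - p i) ≠ 0 := ne_of_gt hpi'
    rw [div_pow, div_pow]
    field_simp
    ring
  have hBnn : 0 ≤ B := by
    have := hnn 0 (by constructor <;> norm_num)
    rw [ident 0] at this
    simpa using this
  have hAnn : 0 ≤ A := by
    set h : ℝ → ℝ := fun z => A * z + B * (1 - z) with hh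
    have hpos : ∀ z ∈ Set.Ioo (0:ℝ) 1, 0 ≤ h z := by
      intro z hz
      obtain ⟨hz0, hz1⟩ := hz
      have h1z : (0:ℝ) < (1-z)^d := pow_pos (by linarith) d
      have hfz : fi z = (1-z)^d * h z := by
        rw [ident z, hh]; ring
      have := hnn z ⟨le_of_lt hz0, le_of_lt hz1⟩
      rw [hfz] at this
      exact (mul_nonneg_iff_of_pos_left h1z).mp this
    have hcont : Continuous h := by
      rw [hh]
      exact (continuous_const.mul continuous_id).add
        (continuous_const.mul (continuous_const.sub continuous_id))
    have hne : (nhdsWithin (1:ℝ) (Set.Ioo (0:ℝ) 1)).NeBot := by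
      rw [← mem_closure_iff_nhdsWithin_neBot, closure_Ioo (by norm_num : (0:ℝ) ≠ 1)]
      constructor <;> norm_num
    have hlim : Filter.Tendsto h (nhdsWithin (1:ℝ) (Set.Ioo (0:ℝ) 1)) (nhds (h 1)) :=
      (hcont.tendsto 1).mono_left nhdsWithin_le_nhds
    have : 0 ≤ h 1 :=
      ge_of_tendsto hlim (Filter.eventually_of_mem self_mem_nhdsWithin
        fun x hx => hpos x hx)
    simpa [hh] using this
  exact ⟨A, B, hAnn, hBnn, fun z _ => ident z⟩
end

section
/- Let f(p) = det(Xᵀ diag(w_1p_1,…,w_Np_N) X) on the probability simplex with f(p) > 0 at a point p, and for each i let f_i be the lift-one profile function f_i(z) = f((1−z)/(1−p_i)·p_1,…, z at position i,…). Then p maximizes f over the simplex if and only if for every i, f_i attains its maximum over [0,1] at z = p_i. -/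
open Matrix Set Filter
open scoped MatrixOrder

private lemma stmt15_sum_nonpos {n : ℕ} (c : Fin n → ℝ)
    (h : ∀ t ∈ Set.Icc (0:ℝ) 1, ∏ j, (1 + t * c j) ≤ 1) : ∑ j, c j ≤ 0 := by
  set φ : ℝ → ℝ := fun t => ∏ j, (1 + t * c j) with hφdef
  have hφ : HasDerivAt φ (∑ j, c j) 0 := by
    have h1 : ∀ j ∈ Finset.univ, HasDerivAt (fun t : ℝ => 1 + t * c j) (c j) 0 := by
      intro j _
      simpa using ((hasDerivAt_id (0:ℝ)).mul_const (c j)).const_add 1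
    have := HasDerivAt.fun_finsetProd h1
    simpa using this
  have h2 : Filter.Tendsto (slope φ 0) (nhdsWithin 0 (Set.Ioi 0)) (nhds (∑ j, c j)) :=
    (hasDerivAt_iff_tendsto_slope.mp hφ).mono_left
      (nhdsWithin_mono 0 (fun t ht => Set.mem_compl_singleton_iff.mpr (ne_of_gt ht)))
  refine le_of_tendsto h2 ?_
  filter_upwards [Ioc_mem_nhdsGT_of_mem (Set.left_mem_Ico.mpr one_pos)] with t ht
  have hle := h t ⟨le_of_lt ht.1, ht.2⟩
  have hφ0 : φ 0 = 1 := by simp [hφdef]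
  rw [slope_def_field]
  rw [sub_zero, hφ0]
  exact div_nonpos_of_nonpos_of_nonneg (by linarith) (le_of_lt ht.1)

private lemma stmt15_prod_le_one {n : ℕ} (hn : 0 < n) (ν : Fin n → ℝ) (h0 : ∀ j, 0 ≤ ν j)
    (hs : ∑ j, ν j ≤ n) : ∏ j, ν j ≤ 1 := by
  have hw : ∑ _j : Fin n, (1/n : ℝ) = 1 := by
    rw [Finset.sum_const, Finset.card_univ, Fintype.card_fin, nsmul_eq_mul]
    field_simp
  have hgm := Real.geom_mean_le_arith_mean_weighted Finset.univ (fun _ => (1/n:ℝ)) ν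
    (fun i _ => by positivity) hw (fun i _ => h0 i)
  rw [Real.finset_prod_rpow Finset.univ ν (fun i _ => h0 i) (1/n)] at hgm
  have hsum : ∑ i : Fin n, (1/n : ℝ) * ν i ≤ 1 := by
    rw [← Finset.mul_sum]
    rw [div_mul_eq_mul_div, one_mul, div_le_one (by positivity)]
    exact hs
  have hprodnn : (0:ℝ) ≤ ∏ j, ν j := Finset.prod_nonneg (fun i _ => h0 i)
  by_contra hcon
  push_neg at hcon
  have : (1:ℝ) < (∏ j, ν j) ^ (1/n : ℝ) := by
    exact Real.one_lt_rpow_iff_of_pos (by linarith) |>.mpr (Or.inl ⟨hcon, by positivity⟩)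
  linarith [le_trans hgm hsum]


private lemma stmt15_det_aeval {n : ℕ} {S : Matrix (Fin n) (Fin n) ℝ} (hS : S.IsHermitian)
    (a b : ℝ) :
    (a • (1 : Matrix (Fin n) (Fin n) ℝ) + b • S).det = ∏ j, (a + b * hS.eigenvalues j) := by
  have hU : (hS.eigenvectorUnitary : Matrix (Fin n) (Fin n) ℝ) *
      star (hS.eigenvectorUnitary : Matrix (Fin n) (Fin n) ℝ) = 1 :=
    (Matrix.mem_unitaryGroup_iff).mp hS.eigenvectorUnitary.2
  set U : Matrix (Fin n) (Fin n) ℝ := (hS.eigenvectorUnitary : Matrix (Fin n) (Fin n) ℝ) with hUdef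
  have hid : (RCLike.ofReal ∘ hS.eigenvalues : Fin n → ℝ) = hS.eigenvalues := by
    funext j; rfl
  have hmain : a • (1 : Matrix (Fin n) (Fin n) ℝ) + b • S
      = U * (diagonal (fun j => a + b * hS.eigenvalues j)) * star U := by
    have hd : diagonal (fun j => a + b * hS.eigenvalues j)
        = a • (1 : Matrix (Fin n) (Fin n) ℝ) + b • diagonal hS.eigenvalues := by
      ext j k
      by_cases h : j = k
      · subst h; simp [Matrix.diagonal_apply, Matrix.one_apply]
      · simp [Matrix.diagonal_apply, Matrix.one_apply, h]
    rw [hd, Matrix.mul_add, Matrix.add_mul]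
    congr 1
    · rw [Matrix.mul_smul, Matrix.smul_mul, Matrix.mul_one, hU]
    · rw [Matrix.mul_smul, Matrix.smul_mul]
      congr 1
      conv_lhs => rw [hS.spectral_theorem, hid, Unitary.conjStarAlgAut_apply]
  rw [hmain, Matrix.det_mul_right_comm, hU, Matrix.one_mul, det_diagonal]

private lemma stmt15_trace_eq {n : ℕ} {S : Matrix (Fin n) (Fin n) ℝ} (hS : S.IsHermitian) :
    S.trace = ∑ j, hS.eigenvalues j := by
  have hU : star (hS.eigenvectorUnitary : Matrix (Fin n) (Fin n) ℝ) *
      (hS.eigenvectorUnitary : Matrix (Fin n) (Fin n) ℝ) = 1 :=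
    (Matrix.mem_unitaryGroup_iff').mp hS.eigenvectorUnitary.2
  have hid : (RCLike.ofReal ∘ hS.eigenvalues : Fin n → ℝ) = hS.eigenvalues := by
    funext j; rfl
  conv_lhs => rw [hS.spectral_theorem, hid, Unitary.conjStarAlgAut_apply]
  rw [Matrix.trace_mul_cycle, hU, Matrix.one_mul, trace_diagonal]

private lemma stmt15_conj {n : ℕ} {A : Matrix (Fin n) (Fin n) ℝ} (hA : A.PosSemidef)
    (hdet : A.det ≠ 0) {C : Matrix (Fin n) (Fin n) ℝ} (hC : C.PosSemidef) :
    ∃ μ : Fin n → ℝ, (∀ j, 0 ≤ μ j) ∧ (((CFC.sqrt A)⁻¹ * C * (CFC.sqrt A)⁻¹).trace = ∑ j, μ j) ∧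
      ∀ a b : ℝ, (a • A + b • C).det = A.det * ∏ j, (a + b * μ j) := by
  set R : Matrix (Fin n) (Fin n) ℝ := CFC.sqrt A with hRdef
  have hRR : R * R = A := CFC.sqrt_mul_sqrt_self A hA.nonneg
  have hRA : R.det * R.det = A.det := by rw [← det_mul, hRR]
  have hRdet : IsUnit R.det := by
    refine isUnit_iff_ne_zero.mpr (fun h => hdet ?_)
    rw [← hRA, h, mul_zero]
  have hRH : R.IsHermitian := (CFC.sqrt_nonneg A).posSemidef.isHermitian
  have hRiH : (R⁻¹).IsHermitian := hRH.inv
  set S : Matrix (Fin n) (Fin n) ℝ := R⁻¹ * C * R⁻¹ with hSdef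
  have hS : S.PosSemidef := by
    have := hC.conjTranspose_mul_mul_same (R⁻¹)
    rwa [hRiH.eq] at this
  refine ⟨hS.1.eigenvalues, hS.eigenvalues_nonneg, (stmt15_trace_eq hS.1), ?_⟩
  intro a b
  have hRSR : R * S * R = C := by
    rw [hSdef]
    rw [show R * (R⁻¹ * C * R⁻¹) * R = (R * R⁻¹) * C * (R⁻¹ * R) by
      simp only [Matrix.mul_assoc]]
    rw [Matrix.mul_nonsing_inv _ hRdet, Matrix.nonsing_inv_mul _ hRdet, Matrix.one_mul,
      Matrix.mul_one]
  have h2 : a • A + b • C = R * (a • (1 : Matrix (Fin n) (Fin n) ℝ) + b • S) * R := by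
    rw [Matrix.mul_add, Matrix.add_mul]
    congr 1
    · rw [Matrix.mul_smul, Matrix.smul_mul, Matrix.mul_one, hRR]
    · rw [Matrix.mul_smul, Matrix.smul_mul, hRSR]
  rw [h2, det_mul, det_mul, stmt15_det_aeval hS.1 a b]
  rw [← hRA]; ring

private lemma stmt15_edge {n : ℕ} {A : Matrix (Fin n) (Fin n) ℝ} (hA : A.PosSemidef)
    (hdet : 0 < A.det) {C : Matrix (Fin n) (Fin n) ℝ} (hC : C.PosSemidef)
    (h : ∀ t ∈ Set.Icc (0:ℝ) 1, ((1-t) • A + t • C).det ≤ A.det) :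
    ((CFC.sqrt A)⁻¹ * C * (CFC.sqrt A)⁻¹).trace ≤ (n : ℝ) := by
  obtain ⟨μ, hμ0, htr, hid⟩ := stmt15_conj hA (ne_of_gt hdet) hC
  have hkey : ∑ j, (μ j - 1) ≤ 0 := by
    apply stmt15_sum_nonpos
    intro t ht
    have h1 := h t ht
    rw [hid (1-t) t] at h1
    have h2 : ∏ j, ((1-t) + t * μ j) ≤ 1 := by
      by_contra hcon
      push_neg at hcon
      nlinarith
    calc ∏ j, (1 + t * (μ j - 1)) = ∏ j, ((1-t) + t * μ j) :=
          Finset.prod_congr rfl fun j _ => by ring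
      _ ≤ 1 := h2
  rw [htr]
  have hsub : ∑ j, (μ j - 1) = (∑ j, μ j) - n := by
    rw [Finset.sum_sub_distrib, Finset.sum_const, Finset.card_univ, Fintype.card_fin,
      nsmul_eq_mul, mul_one]
  linarith [hsub ▸ hkey]

private lemma stmt15_final {n : ℕ} (hn : 0 < n) {A : Matrix (Fin n) (Fin n) ℝ}
    (hA : A.PosSemidef) (hdet : 0 < A.det) {C : Matrix (Fin n) (Fin n) ℝ} (hC : C.PosSemidef)
    (h : ((CFC.sqrt A)⁻¹ * C * (CFC.sqrt A)⁻¹).trace ≤ (n : ℝ)) : C.det ≤ A.det := by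
  obtain ⟨μ, hμ0, htr, hid⟩ := stmt15_conj hA (ne_of_gt hdet) hC
  have h0 : C.det = A.det * ∏ j, μ j := by
    have := hid 0 1
    simpa using this
  rw [h0]
  have hle : ∏ j, μ j ≤ 1 := by
    refine stmt15_prod_le_one hn μ hμ0 ?_
    rw [← htr]; exact h
  nlinarith

/-- Lift-one characterization of D-optimality: a probability vector `p` with `f(p) > 0`
maximizes `f` over the simplex iff, for every `i`, the lift-one profile `f_i` attains its
maximum over `[0,1]` at `z = p i`. -/
theorem stmt15 (N d : ℕ) (X : Matrix (Fin N) (Fin (d + 1)) ℝ)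
    (w : Fin N → ℝ) (hw : ∀ i, 0 ≤ w i)
    (f : (Fin N → ℝ) → ℝ)
    (hf : ∀ q, f q = (Xᵀ * Matrix.diagonal (fun i => w i * q i) * X).det)
    (p : Fin N → ℝ)
    (hpS : p ∈ {q : Fin N → ℝ | (∀ i, 0 ≤ q i) ∧ ∑ i, q i = 1})
    (hfp : 0 < f p)
    (fi : Fin N → ℝ → ℝ)
    (hfi : ∀ i z, fi i z = f (fun j => if j = i then z else p j * (1 - z) / (1 - p i))) :
    IsMaxOn f {q : Fin N → ℝ | (∀ i, 0 ≤ q i) ∧ ∑ i, q i = 1} p ↔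
      ∀ i, IsMaxOn (fi i) (Set.Icc 0 1) (p i) := by
  classical
  obtain ⟨hp0, hp1⟩ := hpS
  have hpile : ∀ i, p i ≤ 1 := fun i => by
    calc p i ≤ ∑ j, p j := Finset.single_le_sum (fun j _ => hp0 j) (Finset.mem_univ i)
      _ = 1 := hp1
  have hpj0 : ∀ i, p i = 1 → ∀ j, j ≠ i → p j = 0 := by
    intro i hpi j hj
    have h1 : p i + ∑ k ∈ Finset.univ.erase i, p k = ∑ k, p k :=
      Finset.add_sum_erase Finset.univ p (Finset.mem_univ i)
    have h2 : ∑ k ∈ Finset.univ.erase i, p k = 0 := by rw [hp1] at h1; linarith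
    have h3 := (Finset.sum_eq_zero_iff_of_nonneg
      (fun k _ => hp0 k)).mp h2 j (Finset.mem_erase.mpr ⟨hj, Finset.mem_univ j⟩)
    exact h3
  -- M and its basic properties
  set M : (Fin N → ℝ) → Matrix (Fin (d+1)) (Fin (d+1)) ℝ :=
    fun q => Xᵀ * Matrix.diagonal (fun i => w i * q i) * X with hM
  have hfM : ∀ q, f q = (M q).det := hf
  have hMpsd : ∀ q : Fin N → ℝ, (∀ i, 0 ≤ q i) → (M q).PosSemidef := by
    intro q hq
    have hD : (Matrix.diagonal (fun i => w i * q i)).PosSemidef :=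
      Matrix.PosSemidef.diagonal (fun i => mul_nonneg (hw i) (hq i))
    have := hD.conjTranspose_mul_mul_same X
    rwa [Matrix.conjTranspose_eq_transpose_of_trivial] at this
  constructor
  · -- forward
    intro hmax i
    rw [isMaxOn_iff]
    intro z hz
    rcases lt_or_eq_of_le (hpile i) with hlt | heq
    · have hne : (1:ℝ) - p i ≠ 0 := by linarith
      have hfip : fi i (p i) = f p := by
        rw [hfi]
        congr 1
        funext j
        by_cases hj : j = i
        · subst hj; simp
        · simp only [hj, if_false]
          rw [mul_div_assoc, div_self hne, mul_one]
      have hv0 : ∀ j, 0 ≤ (fun j => if j = i then z else p j * (1 - z) / (1 - p i)) j := by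
        intro j
        by_cases hj : j = i
        · simp only [hj, if_pos rfl]; exact hz.1
        · simp only [hj, if_false]
          exact div_nonneg (mul_nonneg (hp0 j) (by linarith [hz.2])) (by linarith)
      have hv1 : ∑ j, (if j = i then z else p j * (1 - z) / (1 - p i)) = 1 := by
        have h2 : ∑ j ∈ Finset.univ.erase i, (if j = i then z else p j * (1 - z) / (1 - p i))
            = ∑ j ∈ Finset.univ.erase i, p j * ((1 - z) / (1 - p i)) := by
          refine Finset.sum_congr rfl fun j hj => ?_
          rw [if_neg (Finset.mem_erase.mp hj).1, mul_div_assoc]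
        have h3 : p i + ∑ j ∈ Finset.univ.erase i, p j = 1 := by
          rw [Finset.add_sum_erase Finset.univ p (Finset.mem_univ i), hp1]
        have h4 : ∑ j ∈ Finset.univ.erase i, p j = 1 - p i := by linarith
        have h5 : (1 - p i) * ((1 - z) / (1 - p i)) = 1 - z := by field_simp
        calc ∑ j, (if j = i then z else p j * (1 - z) / (1 - p i))
            = (if i = i then z else p i * (1 - z) / (1 - p i))
              + ∑ j ∈ Finset.univ.erase i, (if j = i then z else p j * (1 - z) / (1 - p i)) :=
              (Finset.add_sum_erase Finset.univ _ (Finset.mem_univ i)).symm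
          _ = z + (1 - p i) * ((1 - z) / (1 - p i)) := by
              rw [if_pos rfl, h2, ← Finset.sum_mul, h4]
          _ = 1 := by rw [h5]; ring
      have := isMaxOn_iff.mp hmax _ ⟨hv0, hv1⟩
      rw [hfi, hfip]
      exact this
    · -- p i = 1
      have hsc : ∀ c : ℝ, f (c • p) = c ^ (d+1) * f p := by
        intro c
        rw [hf, hf]
        have hd : Matrix.diagonal (fun j => w j * (c • p) j)
            = c • Matrix.diagonal (fun j => w j * p j) := by
          ext j k
          by_cases hjk : j = k
          · subst hjk
            simp only [Matrix.diagonal_apply_eq, Matrix.smul_apply, smul_eq_mul,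
              Pi.smul_apply]
            ring
          · simp [Matrix.diagonal_apply_ne _ hjk]
        rw [hd, Matrix.mul_smul, Matrix.smul_mul, det_smul, Fintype.card_fin]
      have hzp : ∀ y : ℝ, (fun j => if j = i then y else p j * (1 - y) / (1 - p i)) = y • p := by
        intro y
        funext j
        by_cases hj : j = i
        · subst hj; simp [heq]
        · simp [hj, hpj0 i heq j hj]
      rw [hfi, hfi, hzp, hzp, hsc, hsc, heq, one_pow, one_mul]
      have h1 : z ^ (d+1) ≤ 1 := pow_le_one₀ hz.1 hz.2
      nlinarith
  · -- backward
    intro hli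
    rw [isMaxOn_iff]
    intro q hq
    obtain ⟨hq0, hq1⟩ := hq
    set e : Fin N → (Fin N → ℝ) := fun i j => if j = i then (1:ℝ) else 0 with he
    have he0 : ∀ i j, 0 ≤ e i j := by
      intro i j; by_cases hj : j = i <;> simp [he, hj]
    have hA : (M p).PosSemidef := hMpsd p hp0
    have hdetA : 0 < (M p).det := by rw [← hfM p]; exact hfp
    have hMcomb : ∀ (a b : ℝ) (u v : Fin N → ℝ),
        M (fun j => a * u j + b * v j) = a • M u + b • M v := by
      intro a b u v
      show Xᵀ * _ * X = _
      have hd : Matrix.diagonal (fun jj => w jj * (a * u jj + b * v jj))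
          = a • Matrix.diagonal (fun jj => w jj * u jj)
            + b • Matrix.diagonal (fun jj => w jj * v jj) := by
        ext j k
        by_cases hjk : j = k
        · subst hjk
          simp only [Matrix.diagonal_apply_eq, Matrix.add_apply, Matrix.smul_apply,
            smul_eq_mul]
          ring
        · simp [Matrix.diagonal_apply_ne _ hjk]
      rw [hd, Matrix.mul_add, Matrix.add_mul, Matrix.mul_smul, Matrix.smul_mul,
        Matrix.mul_smul, Matrix.smul_mul]
    have hedge : ∀ i, ∀ t ∈ Set.Icc (0:ℝ) 1,
        ((1-t) • M p + t • M (e i)).det ≤ (M p).det := by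
      intro i t ht
      rw [← hMcomb (1-t) t p (e i), ← hfM, ← hfM p]
      rcases lt_or_eq_of_le (hpile i) with hlt | heq
      · have hne : (1:ℝ) - p i ≠ 0 := by linarith
        have hz : p i + t * (1 - p i) ∈ Set.Icc (0:ℝ) 1 :=
          ⟨add_nonneg (hp0 i) (mul_nonneg ht.1 (by linarith)), by nlinarith [ht.2]⟩
        have h1 := isMaxOn_iff.mp (hli i) _ hz
        rw [hfi, hfi] at h1
        have hrhs : (fun j => if j = i then p i else p j * (1 - p i) / (1 - p i)) = p := by
          funext j
          by_cases hj : j = i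
          · subst hj; simp
          · simp only [hj, if_false]
            rw [mul_div_assoc, div_self hne, mul_one]
        have hlhs : (fun j => if j = i then p i + t * (1 - p i)
              else p j * (1 - (p i + t * (1 - p i))) / (1 - p i))
            = (fun j => (1-t) * p j + t * e i j) := by
          funext j
          by_cases hj : j = i
          · subst hj; simp [he]; ring
          · simp only [he, hj, if_false, mul_zero, add_zero]
            field_simp
            ring
        rw [hrhs, hlhs] at h1
        exact h1
      · have hep : e i = p := by
          funext j
          by_cases hj : j = i
          · subst hj; simp [he, heq]
          · simp [he, hj, hpj0 i heq j hj]
        rw [hep, show (fun j => (1-t) * p j + t * p j) = p from funext fun j => by ring]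
    have htri : ∀ i, ((CFC.sqrt (M p))⁻¹ * M (e i) * (CFC.sqrt (M p))⁻¹).trace ≤ ((d+1 : ℕ) : ℝ) := fun i =>
      stmt15_edge hA hdetA (hMpsd (e i) (he0 i)) (hedge i)
    have hqdec : M q = ∑ i, q i • M (e i) := by
      show Xᵀ * _ * X = _
      have hdiag : Matrix.diagonal (fun j => w j * q j)
          = ∑ i, q i • Matrix.diagonal (fun j => w j * e i j) := by
        ext j k
        rw [Matrix.sum_apply]
        by_cases hjk : j = k
        · subst hjk
          simp only [Matrix.diagonal_apply_eq, Matrix.smul_apply, smul_eq_mul, he]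
          rw [Finset.sum_congr rfl (fun i _ => by
            show q i * (w j * if j = i then (1:ℝ) else 0) = if j = i then q i * w j else 0
            by_cases hji : j = i <;> simp [hji])]
          rw [Finset.sum_ite_eq Finset.univ j (fun i => q i * w j)]
          simp [mul_comm]
        · simp [Matrix.diagonal_apply_ne _ hjk]
      rw [hdiag, Matrix.mul_sum, Matrix.sum_mul]
      refine Finset.sum_congr rfl fun i _ => ?_
      rw [Matrix.mul_smul, Matrix.smul_mul]
    have htrq : ((CFC.sqrt (M p))⁻¹ * M q * (CFC.sqrt (M p))⁻¹).trace ≤ ((d+1:ℕ) : ℝ) := by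
      rw [hqdec, Matrix.mul_sum, Matrix.sum_mul, trace_sum]
      have hterm : ∀ i, (((CFC.sqrt (M p))⁻¹ * (q i • M (e i))) * (CFC.sqrt (M p))⁻¹).trace
          = q i * ((CFC.sqrt (M p))⁻¹ * M (e i) * (CFC.sqrt (M p))⁻¹).trace := by
        intro i
        rw [mul_smul_comm, Matrix.smul_mul, trace_smul, smul_eq_mul]
      calc ∑ i, (((CFC.sqrt (M p))⁻¹ * (q i • M (e i))) * (CFC.sqrt (M p))⁻¹).trace
          = ∑ i, q i * ((CFC.sqrt (M p))⁻¹ * M (e i) * (CFC.sqrt (M p))⁻¹).trace :=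
            Finset.sum_congr rfl fun i _ => hterm i
        _ ≤ ∑ i, q i * ((d+1:ℕ) : ℝ) :=
            Finset.sum_le_sum fun i _ => mul_le_mul_of_nonneg_left (htri i) (hq0 i)
        _ = ((d+1:ℕ) : ℝ) := by rw [← Finset.sum_mul, hq1, one_mul]
    have hfin := stmt15_final (Nat.succ_pos d) hA hdetA (hMpsd q hq0) htrq
    rw [hfM q, hfM p]
    exact hfin
end
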